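/- Let A be an n×n real symmetric matrix and fix ũ ∈ S^{n−1}. For every 0 ≤ j ≤ n−1, the map u ↦ v_j(u) (the j-th Lanczos vector) is locally Lipschitz at ũ with constant (4‖A‖)^j · γ_j(ũ). -/

import Mathlib

open MeasureTheory Polynomial Filter
open scoped ENNReal NNReal InnerProductSpace

noncomputable section

/-- A function `f` between metric spaces is *locally Lipschitz with constant `c` at `x₀`*
if for every `c' > c` there is a neighborhood of `x₀` on which `f` is `c'`-Lipschitz. -/
def LocallyLipschitzAtWith {X Y : Type*} [MetricSpace X] [MetricSpace Y]
    (f : X → Y) (c : ℝ) (x₀ : X) : Prop :=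
  ∀ c' : ℝ, c < c' → ∃ U ∈ nhds x₀, ∀ x ∈ U, ∀ y ∈ U, dist (f x) (f y) ≤ c' * dist x y

/-- `S₁` is *`K`-connected in `S₂`* if any two distinct points of `S₁` are joined by a
rectifiable Jordan arc inside `S₂` of length at most `K` times their distance. -/
def IsKConnectedIn {X : Type*} [MetricSpace X] (K : ℝ) (S₁ S₂ : Set X) : Prop :=
  ∀ x ∈ S₁, ∀ y ∈ S₁, x ≠ y → ∃ γ : ℝ → X,
    ContinuousOn γ (Set.Icc 0 1) ∧ Set.InjOn γ (Set.Icc 0 1) ∧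
    γ 0 = x ∧ γ 1 = y ∧ Set.MapsTo γ (Set.Icc 0 1) S₂ ∧
    eVariationOn γ (Set.Icc 0 1) ≤ ENNReal.ofReal (K * dist x y)

/-- A matrix acting as a continuous linear map on Euclidean space. -/
def matCLM {n : ℕ} (A : Matrix (Fin n) (Fin n) ℝ) :
    EuclideanSpace ℝ (Fin n) →L[ℝ] EuclideanSpace ℝ (Fin n) :=
  Matrix.toEuclideanCLM (𝕜 := ℝ) A

/-- The spectral (`ℓ² → ℓ²` operator) norm of a matrix. -/
def specNorm {n : ℕ} (A : Matrix (Fin n) (Fin n) ℝ) : ℝ := ‖matCLM A‖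

/-- The Lanczos vectors `v_j(u)`:  `v₀ = u` and `v_{j+1}` is the normalized projection of
`A v_j` onto the orthogonal complement of `span {v₀, …, v_j}`. -/
def lanczosVec {n : ℕ} (A : Matrix (Fin n) (Fin n) ℝ) (u : EuclideanSpace ℝ (Fin n)) :
    ℕ → EuclideanSpace ℝ (Fin n)
  | 0 => u
  | j + 1 =>
    let w := matCLM A (lanczosVec A u j) -
      (Submodule.orthogonalProjection
        (Submodule.span ℝ (Set.range fun i : Fin (j + 1) => lanczosVec A u i.1))
        (matCLM A (lanczosVec A u j)) : EuclideanSpace ℝ (Fin n))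
    ‖w‖⁻¹ • w

/-- The projection of `A v_j` onto the orthogonal complement of `W_j = span {v₀, …, v_j}`. -/
def lanczosResidual {n : ℕ} (A : Matrix (Fin n) (Fin n) ℝ) (u : EuclideanSpace ℝ (Fin n))
    (j : ℕ) : EuclideanSpace ℝ (Fin n) :=
  matCLM A (lanczosVec A u j) -
    (Submodule.orthogonalProjection
      (Submodule.span ℝ (Set.range fun i : Fin (j + 1) => lanczosVec A u i.1))
      (matCLM A (lanczosVec A u j)) : EuclideanSpace ℝ (Fin n))

/-- The Jacobi coefficient `α_j(u) = ⟨A v_j(u), v_j(u)⟩`. -/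
def lanczosAlpha {n : ℕ} (A : Matrix (Fin n) (Fin n) ℝ) (u : EuclideanSpace ℝ (Fin n))
    (j : ℕ) : ℝ :=
  ⟪matCLM A (lanczosVec A u j), lanczosVec A u j⟫_ℝ

/-- The Jacobi coefficient `β_j(u) = ‖Proj_{W_j^⊥} (A v_j(u))‖`. -/
def lanczosBeta {n : ℕ} (A : Matrix (Fin n) (Fin n) ℝ) (u : EuclideanSpace ℝ (Fin n))
    (j : ℕ) : ℝ :=
  ‖lanczosResidual A u j‖

/-- `γ_j(u) = (∏_{i=0}^{j-1} β_i(u))⁻¹`, the leading coefficient of the `j`-th orthonormal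
polynomial of the spectral measure `μ^u`. -/
def lanczosGamma {n : ℕ} (A : Matrix (Fin n) (Fin n) ℝ) (u : EuclideanSpace ℝ (Fin n))
    (j : ℕ) : ℝ :=
  (∏ i ∈ Finset.range j, lanczosBeta A u i)⁻¹

/-- The `k × k` symmetric tridiagonal matrix with diagonal `a 0, …, a (k-1)` and
sub/superdiagonal `b 0, …, b (k-2)`. -/
def jacobiMatrixOf (a b : ℕ → ℝ) (k : ℕ) : Matrix (Fin k) (Fin k) ℝ :=
  Matrix.of fun i j =>
    if (i : ℕ) = (j : ℕ) then a i
    else if (i : ℕ) + 1 = (j : ℕ) then b i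
    else if (j : ℕ) + 1 = (i : ℕ) then b j
    else 0

/-- The Jacobi matrix output by `k` iterations of the Lanczos algorithm on input `(A, u)`. -/
def lanczosJacobi {n : ℕ} (A : Matrix (Fin n) (Fin n) ℝ) (u : EuclideanSpace ℝ (Fin n))
    (k : ℕ) : Matrix (Fin k) (Fin k) ℝ :=
  jacobiMatrixOf (lanczosAlpha A u) (lanczosBeta A u) k

/-- The list of roots of the characteristic polynomial of `M` (the eigenvalues, with
multiplicity, for symmetric `M`), in decreasing order. -/
def descEigs {k : ℕ} (M : Matrix (Fin k) (Fin k) ℝ) : List ℝ :=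
  (M.charpoly.roots.sort (· ≤ ·)).reverse

/-- A finite family `lam : Fin n → ℝ` is `(δ, ω, j)`-equidistributed if for every finite set `T`
of at most `j` real numbers, at least `δ·n` of the points `lam i` satisfy
`∏_{t ∈ T} |lam i - t| ≥ ω^|T|` (equivalently, `(1/|T|) ∑_{t∈T} log |lam i - t| ≥ log ω`). -/
def EquidistributedTuple (n : ℕ) (lam : Fin n → ℝ) (δ ω : ℝ) (j : ℕ) : Prop :=
  ∀ T : Finset ℝ, T.Nonempty → T.card ≤ j →
    δ * n ≤ ((Finset.univ.filter fun i => ω ^ T.card ≤ ∏ t ∈ T, |lam i - t|).card : ℝ)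

/-- A measure `μ` on `ℝ` is `(δ, ω, j)`-equidistributed if for every finite set `T`
of at most `j` real numbers, `μ {x : ∏_{t ∈ T} |x - t| ≥ ω^|T|} ≥ δ`. -/
def EquidistributedMeasure (μ : Measure ℝ) (δ ω : ℝ) (j : ℕ) : Prop :=
  ∀ T : Finset ℝ, T.Nonempty → T.card ≤ j →
    ENNReal.ofReal δ ≤ μ {x : ℝ | ω ^ T.card ≤ ∏ t ∈ T, |x - t|}

/-- The Kolmogorov distance between two measures on `ℝ`. -/
def kolDist (μ ν : Measure ℝ) : ℝ :=
  ⨆ t : ℝ, |(μ (Set.Iic t)).toReal - (ν (Set.Iic t)).toReal|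

/-- The set `I_n(δ, ε)` of `(δ, ε)`-incompressible unit vectors: unit vectors such that every
set of at least `δ·n` coordinates carries more than `ε` of the `ℓ²` mass. -/
def sphereIncompressible (n : ℕ) (δ ε : ℝ) : Set (EuclideanSpace ℝ (Fin n)) :=
  {u | ‖u‖ = 1 ∧ ∀ S : Finset (Fin n), δ * n ≤ (S.card : ℝ) → ε < ∑ i ∈ S, (u i) ^ 2}

/-- `σ` is the uniform probability measure on the unit sphere of `ℝⁿ`: the (unique)
rotation-invariant probability measure supported on the sphere. -/
def IsUniformOnSphere {n : ℕ} (σ : Measure (EuclideanSpace ℝ (Fin n))) : Prop :=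
  IsProbabilityMeasure σ ∧ σ {u : EuclideanSpace ℝ (Fin n) | ‖u‖ = 1} = 1 ∧
    ∀ e : EuclideanSpace ℝ (Fin n) ≃ₗᵢ[ℝ] EuclideanSpace ℝ (Fin n), σ.map e = σ

/-- `m` is a median of the real random variable `f` under the measure `σ`. -/
def IsMedian {Ω : Type*} [MeasurableSpace Ω] (σ : Measure Ω) (f : Ω → ℝ) (m : ℝ) : Prop :=
  2⁻¹ ≤ σ {x | f x ≤ m} ∧ 2⁻¹ ≤ σ {x | m ≤ f x}

/-- The empirical spectral distribution `(1/n) ∑ δ_{lam i}`. -/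
def esd (n : ℕ) (lam : Fin n → ℝ) : Measure ℝ :=
  ((n : ℝ≥0∞))⁻¹ • ∑ i : Fin n, Measure.dirac (lam i)

/-- The spectral measure `μ^u = ∑ w_i² δ_{lam i}`. -/
def vectorSpectralMeasure (n : ℕ) (lam : Fin n → ℝ) (w : Fin n → ℝ) : Measure ℝ :=
  ∑ i : Fin n, (ENNReal.ofReal ((w i) ^ 2)) • Measure.dirac (lam i)

/-- The `k`-th moment of a measure on `ℝ`. -/
def mom (μ : Measure ℝ) (k : ℕ) : ℝ := ∫ x, x ^ k ∂μ

/-- The `(k+1) × (k+1)` Hankel matrix of moments of `μ`. -/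
def hankel (μ : Measure ℝ) (k : ℕ) : Matrix (Fin (k + 1)) (Fin (k + 1)) ℝ :=
  Matrix.of fun i j => mom μ ((i : ℕ) + (j : ℕ))

/-- `D_k`, the Hankel determinant of `μ`. -/
def hankelDet (μ : Measure ℝ) (k : ℕ) : ℝ := (hankel μ k).det

/-- `D_{k-1}`, with the convention `D_{-1} = 1`. -/
def hankelDetPred (μ : Measure ℝ) : ℕ → ℝ
  | 0 => 1
  | k + 1 => hankelDet μ k

/-- The `k`-th orthonormal polynomial of `μ`, evaluated at `x`, via the determinantal formula
`p_k(x) = det M̃_k(x) / √(D_{k-1} D_k)`. -/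
def orthoPolyEval (μ : Measure ℝ) (k : ℕ) (x : ℝ) : ℝ :=
  (Matrix.of fun i j : Fin (k + 1) =>
      if (i : ℕ) = k then x ^ (j : ℕ) else mom μ ((i : ℕ) + (j : ℕ))).det /
    Real.sqrt (hankelDetPred μ k * hankelDet μ k)

/-- The Jacobi coefficient `α_k` of the measure `μ`:  `α_k = ∫ x p_k(x)² dμ(x)`. -/
def measJacobiAlpha (μ : Measure ℝ) (k : ℕ) : ℝ := ∫ x, x * (orthoPolyEval μ k x) ^ 2 ∂μ

/-- The Jacobi coefficient `β_k` of the measure `μ`:  `β_k = √(D_{k-1} D_{k+1}) / D_k`. -/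
def measJacobiBeta (μ : Measure ℝ) (k : ℕ) : ℝ :=
  Real.sqrt (hankelDetPred μ k * hankelDet μ (k + 1)) / hankelDet μ k

/-- The `k`-th Jacobi matrix of the measure `μ`. -/
def measJacobi (μ : Measure ℝ) (k : ℕ) : Matrix (Fin k) (Fin k) ℝ :=
  jacobiMatrixOf (measJacobiAlpha μ) (measJacobiBeta μ) k

end

section AuxLipschitz

variable {E : Type*} [NormedAddCommGroup E] [InnerProductSpace ℝ E]

-- normalization lemma
lemma normalize_lip {x y : E} (hx : x ≠ 0) (hy : y ≠ 0) :
    (‖x‖ + ‖y‖) * ‖‖x‖⁻¹ • x - ‖y‖⁻¹ • y‖ ≤ 2 * ‖x - y‖ := by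
  have ha : (0:ℝ) < ‖x‖ := norm_pos_iff.2 hx
  have hb : (0:ℝ) < ‖y‖ := norm_pos_iff.2 hy
  set a := ‖x‖
  set b := ‖y‖
  set t := ⟪x, y⟫_ℝ with ht
  have hC : |t| ≤ a * b := abs_real_inner_le_norm x y
  have h1 : ‖x - y‖ ^ 2 = a ^ 2 - 2 * t + b ^ 2 := by
    rw [norm_sub_sq_real]
  have h2 : ‖a⁻¹ • x - b⁻¹ • y‖ ^ 2 = 2 - 2 * (t / (a * b)) := by
    rw [norm_sub_sq_real]
    rw [norm_smul, norm_smul, real_inner_smul_left, real_inner_smul_right]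
    simp only [norm_inv, Real.norm_eq_abs, abs_of_pos ha, abs_of_pos hb]
    rw [show ‖x‖ = a from rfl, show ‖y‖ = b from rfl, show ⟪x, y⟫_ℝ = t from rfl]
    field_simp
    ring
  -- square both sides
  have hs : ((a + b) * ‖a⁻¹ • x - b⁻¹ • y‖) ^ 2 ≤ (2 * ‖x - y‖) ^ 2 := by
    rw [mul_pow, mul_pow, h1, h2]
    have hab : (0:ℝ) < a * b := mul_pos ha hb
    have key : (a + b) ^ 2 * (2 * (a * b) - 2 * t) ≤ 4 * (a ^ 2 - 2 * t + b ^ 2) * (a * b) := by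
      nlinarith [mul_nonneg (sq_nonneg (a - b)) (by nlinarith [neg_abs_le t] : (0:ℝ) ≤ a * b + t)]
    have : 2 - 2 * (t / (a * b)) = (2 * (a * b) - 2 * t) / (a * b) := by field_simp
    rw [this]
    rw [show (a+b)^2 * ((2*(a*b) - 2*t)/(a*b)) = (a+b)^2*(2*(a*b)-2*t)/(a*b) by ring,
      div_le_iff₀ hab]
    nlinarith [key]
  have hXnn : 0 ≤ (a + b) * ‖a⁻¹ • x - b⁻¹ • y‖ := by positivity
  have hYnn : 0 ≤ 2 * ‖x - y‖ := by positivity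
  exact (pow_le_pow_iff_left₀ hXnn hYnn (by norm_num)).1 hs

lemma norm_sub_proj_le (K : Submodule ℝ E) [Submodule.HasOrthogonalProjection K] (z : E) :
    ‖z - Submodule.orthogonalProjection K z‖ ≤ ‖z‖ := by
  have h0 : ⟪z - Submodule.orthogonalProjection K z, (Submodule.orthogonalProjection K z : E)⟫_ℝ = 0 := by
    have := Submodule.sub_starProjection_mem_orthogonal (K := K) z
    exact (Submodule.mem_orthogonal' K _).1 this _ (Submodule.orthogonalProjection K z).2
  have h : ‖z‖ ^ 2 = ‖z - Submodule.orthogonalProjection K z‖ ^ 2 + ‖(Submodule.orthogonalProjection K z : E)‖ ^ 2 := by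
    have := norm_add_sq_real (z - Submodule.orthogonalProjection K z) (Submodule.orthogonalProjection K z)
    simpa [h0] using this
  nlinarith [norm_nonneg z, norm_nonneg (z - (Submodule.orthogonalProjection K z : E)),
    sq_nonneg ‖(Submodule.orthogonalProjection K z : E)‖]

lemma proj_eq_sum {m : ℕ} (f : Fin m → E) (hf : Orthonormal ℝ f)
    [Submodule.HasOrthogonalProjection (Submodule.span ℝ (Set.range f))] (z : E) :
    (Submodule.orthogonalProjection (Submodule.span ℝ (Set.range f)) z : E)
      = ∑ i, ⟪z, f i⟫_ℝ • f i := by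
  apply Submodule.eq_starProjection_of_mem_of_inner_eq_zero
  · exact Submodule.sum_mem _ fun i _ => Submodule.smul_mem _ _
      (Submodule.subset_span ⟨i, rfl⟩)
  · intro w hw
    induction hw using Submodule.span_induction with
    | mem x hx =>
      obtain ⟨i₀, rfl⟩ := hx
      rw [inner_sub_left, sum_inner]
      have : ∀ i, ⟪⟪z, f i⟫_ℝ • f i, f i₀⟫_ℝ = if i = i₀ then ⟪z, f i₀⟫_ℝ else 0 := by
        intro i
        rw [real_inner_smul_left, (orthonormal_iff_ite (𝕜 := ℝ)).1 hf i i₀]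
        by_cases h : i = i₀ <;> simp [h]
      rw [Finset.sum_congr rfl fun i _ => this i]
      simp
    | zero => simp
    | add x y _ _ hx hy => rw [inner_add_right, hx, hy, add_zero]
    | smul c x _ hx => rw [inner_smul_right, hx, mul_zero]

noncomputable section
variable {n : ℕ} (A : Matrix (Fin n) (Fin n) ℝ) (u : EuclideanSpace ℝ (Fin n))

lemma lanczosVec_succ (k : ℕ) :
    lanczosVec A u (k + 1) = ‖lanczosResidual A u k‖⁻¹ • lanczosResidual A u k := by
  rw [lanczosVec, lanczosResidual]

lemma residual_inner_eq_zero (k : ℕ) {i : ℕ} (hi : i ≤ k) :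
    ⟪lanczosResidual A u k, lanczosVec A u i⟫_ℝ = 0 := by
  have hmem : lanczosVec A u i ∈
      Submodule.span ℝ (Set.range fun l : Fin (k + 1) => lanczosVec A u l.1) :=
    Submodule.subset_span ⟨⟨i, Nat.lt_succ_of_le hi⟩, rfl⟩
  exact (Submodule.mem_orthogonal' _ _).1
    (Submodule.sub_starProjection_mem_orthogonal _) _ hmem

lemma lanczos_inner (hu : ‖u‖ = 1) :
    ∀ k : ℕ, (∀ i < k, lanczosResidual A u i ≠ 0) →
      ∀ a ≤ k, ∀ b ≤ k,
        ⟪lanczosVec A u a, lanczosVec A u b⟫_ℝ = if a = b then 1 else 0 := by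
  intro k
  induction k with
  | zero =>
    intro _ a ha b hb
    interval_cases a; interval_cases b
    rw [if_pos rfl, show lanczosVec A u 0 = u by rw [lanczosVec], real_inner_self_eq_norm_sq, hu]
    norm_num
  | succ k ih =>
    intro hres a ha b hb
    have ihk := ih (fun i hi => hres i (Nat.lt_succ_of_lt hi))
    have hstep : ∀ b' ≤ k, ⟪lanczosVec A u (k+1), lanczosVec A u b'⟫_ℝ = 0 := by
      intro b' hb'
      rw [lanczosVec_succ, real_inner_smul_left, residual_inner_eq_zero A u k hb', mul_zero]
    rcases (by omega : a ≤ k ∨ a = k + 1) with ha' | rfl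
    · rcases (by omega : b ≤ k ∨ b = k + 1) with hb' | rfl
      · exact ihk a ha' b hb'
      · rw [real_inner_comm, hstep a ha']
        rw [if_neg (by omega)]
    · rcases (by omega : b ≤ k ∨ b = k + 1) with hb' | rfl
      · rw [hstep b hb']
        rw [if_neg (by omega)]
      · have hr : lanczosResidual A u k ≠ 0 := hres k (Nat.lt_succ_self k)
        have hnr : ‖lanczosResidual A u k‖ ≠ 0 := norm_ne_zero_iff.2 hr
        rw [lanczosVec_succ, real_inner_smul_left, real_inner_smul_right,
          real_inner_self_eq_norm_sq]
        rw [if_pos rfl]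
        field_simp

lemma lanczos_orthonormal (hu : ‖u‖ = 1) (k : ℕ) (hres : ∀ i < k, lanczosResidual A u i ≠ 0) :
    Orthonormal ℝ (fun i : Fin (k + 1) => lanczosVec A u i.1) := by
  rw [orthonormal_iff_ite]
  intro i j
  rw [lanczos_inner A u hu k hres i.1 (Nat.lt_succ_iff.1 i.2) j.1 (Nat.lt_succ_iff.1 j.2)]
  simp [Fin.ext_iff]

lemma lanczos_norm_one (hu : ‖u‖ = 1) (k : ℕ)
    (hres : ∀ i < k, lanczosResidual A u i ≠ 0) : ‖lanczosVec A u k‖ = 1 := by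
  have := lanczos_inner A u hu k hres k le_rfl k le_rfl
  rw [real_inner_self_eq_norm_sq, if_pos rfl] at this
  nlinarith [norm_nonneg (lanczosVec A u k)]

lemma lanczosResidual_eq_sum (k : ℕ)
    (h : Orthonormal ℝ (fun i : Fin (k + 1) => lanczosVec A u i.1)) :
    lanczosResidual A u k = matCLM A (lanczosVec A u k) -
      ∑ i : Fin (k + 1), ⟪matCLM A (lanczosVec A u k), lanczosVec A u i.1⟫_ℝ •
        lanczosVec A u i.1 := by
  rw [lanczosResidual, proj_eq_sum _ h]

lemma lanczosBeta_le (k : ℕ) :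
    lanczosBeta A u k ≤ specNorm A * ‖lanczosVec A u k‖ :=
  le_trans (norm_sub_proj_le _ _) ((matCLM A).le_opNorm _)

lemma rank_one_diff {E : Type*} [NormedAddCommGroup E] [InnerProductSpace ℝ E]
    (z a b : E) (hna : ‖a‖ = 1) (hnb : ‖b‖ = 1) :
    ‖⟪z, a⟫_ℝ • a - ⟪z, b⟫_ℝ • b‖ ≤ 2 * ‖z‖ * ‖a - b‖ := by
  have hid : ⟪z, a⟫_ℝ • a - ⟪z, b⟫_ℝ • b
      = ⟪z, a - b⟫_ℝ • a + ⟪z, b⟫_ℝ • (a - b) := by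
    rw [inner_sub_right]; module
  rw [hid]
  calc ‖⟪z, a - b⟫_ℝ • a + ⟪z, b⟫_ℝ • (a - b)‖
      ≤ ‖⟪z, a - b⟫_ℝ • a‖ + ‖⟪z, b⟫_ℝ • (a - b)‖ := norm_add_le _ _
    _ = |⟪z, a - b⟫_ℝ| * ‖a‖ + |⟪z, b⟫_ℝ| * ‖a - b‖ := by
        rw [norm_smul, norm_smul]; norm_num
    _ ≤ 2 * ‖z‖ * ‖a - b‖ := by
        have h1 : |⟪z, a - b⟫_ℝ| * ‖a‖ ≤ ‖z‖ * ‖a - b‖ := by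
          rw [hna, mul_one]; exact abs_real_inner_le_norm z (a - b)
        have h2 : |⟪z, b⟫_ℝ| * ‖a - b‖ ≤ ‖z‖ * 1 * ‖a - b‖ := by
          rw [mul_one]
          exact mul_le_mul_of_nonneg_right
            (le_trans (abs_real_inner_le_norm z b) (by rw [hnb, mul_one])) (norm_nonneg _)
        linarith

lemma residual_diff_le (u' : EuclideanSpace ℝ (Fin n)) (k : ℕ)
    (h : Orthonormal ℝ (fun i : Fin (k + 1) => lanczosVec A u i.1))
    (h' : Orthonormal ℝ (fun i : Fin (k + 1) => lanczosVec A u' i.1))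
    (c : ℕ → ℝ) (hc : ∀ i ≤ k, ‖lanczosVec A u i - lanczosVec A u' i‖ ≤ c i) :
    ‖lanczosResidual A u k - lanczosResidual A u' k‖ ≤
      specNorm A * c k + 2 * specNorm A * ∑ i ∈ Finset.range (k + 1), c i := by
  set K := Submodule.span ℝ (Set.range fun i : Fin (k + 1) => lanczosVec A u i.1) with hK
  set z := matCLM A (lanczosVec A u k) with hz
  set z' := matCLM A (lanczosVec A u' k) with hz'
  have hcnn : ∀ i ≤ k, (0:ℝ) ≤ c i := fun i hi => le_trans (norm_nonneg _) (hc i hi)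
  have hz'n : ‖z'‖ ≤ specNorm A := by
    calc ‖z'‖ ≤ ‖matCLM A‖ * ‖lanczosVec A u' k‖ := (matCLM A).le_opNorm _
      _ = specNorm A := by rw [h'.1 ⟨k, Nat.lt_succ_self k⟩, mul_one]; rfl
  have hmap : (Submodule.orthogonalProjection K z : EuclideanSpace ℝ (Fin n))
      = Submodule.orthogonalProjection K (z - z') + Submodule.orthogonalProjection K z' := by
    rw [← Submodule.coe_add, ← map_add, sub_add_cancel]
  have hsum : (Submodule.orthogonalProjection K z' : EuclideanSpace ℝ (Fin n))
      = ∑ i : Fin (k + 1), ⟪z', lanczosVec A u i.1⟫_ℝ • lanczosVec A u i.1 :=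
    proj_eq_sum _ h z'
  have hsum' : lanczosResidual A u' k
      = z' - ∑ i : Fin (k + 1), ⟪z', lanczosVec A u' i.1⟫_ℝ • lanczosVec A u' i.1 :=
    lanczosResidual_eq_sum A u' k h'
  have key : lanczosResidual A u k - lanczosResidual A u' k
      = ((z - z') - Submodule.orthogonalProjection K (z - z'))
        + ∑ i : Fin (k + 1), (⟪z', lanczosVec A u' i.1⟫_ℝ • lanczosVec A u' i.1
            - ⟪z', lanczosVec A u i.1⟫_ℝ • lanczosVec A u i.1) := by
    have e1 : lanczosResidual A u k
        = z - (Submodule.orthogonalProjection K z : EuclideanSpace ℝ (Fin n)) := rfl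
    rw [e1, hsum', hmap, hsum, Finset.sum_sub_distrib]
    abel
  rw [key]
  have hΔ : ‖z - z'‖ ≤ specNorm A * c k := by
    calc ‖z - z'‖ = ‖matCLM A (lanczosVec A u k - lanczosVec A u' k)‖ := by rw [map_sub]
      _ ≤ ‖matCLM A‖ * ‖lanczosVec A u k - lanczosVec A u' k‖ := (matCLM A).le_opNorm _
      _ ≤ specNorm A * c k := by
          apply mul_le_mul_of_nonneg_left (hc k le_rfl) (norm_nonneg _)
  calc ‖((z - z') - (Submodule.orthogonalProjection K (z - z') : EuclideanSpace ℝ (Fin n)))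
        + ∑ i : Fin (k + 1), (⟪z', lanczosVec A u' i.1⟫_ℝ • lanczosVec A u' i.1
            - ⟪z', lanczosVec A u i.1⟫_ℝ • lanczosVec A u i.1)‖
      ≤ ‖(z - z') - (Submodule.orthogonalProjection K (z - z') : EuclideanSpace ℝ (Fin n))‖
        + ∑ i : Fin (k + 1), ‖⟪z', lanczosVec A u' i.1⟫_ℝ • lanczosVec A u' i.1
            - ⟪z', lanczosVec A u i.1⟫_ℝ • lanczosVec A u i.1‖ :=
        le_trans (norm_add_le _ _) (by gcongr; exact norm_sum_le _ _)
    _ ≤ specNorm A * c k + ∑ i : Fin (k + 1), 2 * specNorm A * c i.1 := by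
        gcongr with i _
        · exact le_trans (norm_sub_proj_le K _) hΔ
        · calc ‖⟪z', lanczosVec A u' i.1⟫_ℝ • lanczosVec A u' i.1
              - ⟪z', lanczosVec A u i.1⟫_ℝ • lanczosVec A u i.1‖
              ≤ 2 * ‖z'‖ * ‖lanczosVec A u' i.1 - lanczosVec A u i.1‖ :=
              rank_one_diff z' _ _ (h'.1 i) (h.1 i)
            _ = 2 * ‖z'‖ * ‖lanczosVec A u i.1 - lanczosVec A u' i.1‖ := by
                rw [norm_sub_rev]
            _ ≤ 2 * specNorm A * c i.1 := by
                have := hc i.1 (Nat.lt_succ_iff.1 i.2)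
                have h2 := hcnn i.1 (Nat.lt_succ_iff.1 i.2)
                nlinarith [norm_nonneg (lanczosVec A u i.1 - lanczosVec A u' i.1),
                  norm_nonneg z']
    _ = specNorm A * c k + 2 * specNorm A * ∑ i ∈ Finset.range (k + 1), c i := by
        rw [← Finset.sum_range fun i => 2 * specNorm A * c i, Finset.mul_sum]

end

end AuxLipschitz

set_option maxHeartbeats 1000000 in
/-- For an `n × n` real symmetric matrix `A` and `ũ ∈ S^{n-1}`, for every
`0 ≤ j ≤ n-1` the Lanczos vector map `u ↦ v_j(u)`, as a function on the unit sphere, is locally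
Lipschitz at `ũ` with constant `(4‖A‖)^j γ_j(ũ)`. -/
theorem lanczosVec_locallyLipschitz {n : ℕ} (hn : 0 < n) (A : Matrix (Fin n) (Fin n) ℝ)
    (hA : A.IsHermitian) (ut : Metric.sphere (0 : EuclideanSpace ℝ (Fin n)) 1)
    (j : ℕ) (hj : j ≤ n - 1)
    (hnb : ∀ i < j, lanczosBeta A ut.1 i ≠ 0) :
    LocallyLipschitzAtWith
      (fun u : Metric.sphere (0 : EuclideanSpace ℝ (Fin n)) 1 => lanczosVec A u.1 j)
      ((4 * specNorm A) ^ j * lanczosGamma A ut.1 j) ut := by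
  set w0 := ut.1 with hw0
  have hu : ‖w0‖ = 1 := by
    have := ut.2
    rwa [mem_sphere_zero_iff_norm] at this
  have hresT : ∀ i, i < j → lanczosResidual A w0 i ≠ 0 := fun i hi =>
    norm_ne_zero_iff.1 (by simpa [lanczosBeta] using hnb i hi)
  have hβpos : ∀ i, i < j → 0 < lanczosBeta A w0 i := fun i hi =>
    (Ne.symm (hnb i hi)).lt_of_le (by rw [lanczosBeta]; exact norm_nonneg _)
  have hβleA : ∀ i, i < j → lanczosBeta A w0 i ≤ specNorm A := by
    intro i hi
    have h1 := lanczosBeta_le A w0 i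
    rwa [lanczos_norm_one A w0 hu i (fun l hl => hresT l (lt_trans hl hi)), mul_one] at h1
  have hApos : 0 < j → 0 < specNorm A := fun hj0 =>
    lt_of_lt_of_le (hβpos 0 hj0) (hβleA 0 hj0)
  set L : ℕ → ℝ := fun k => (4 * specNorm A) ^ k * lanczosGamma A w0 k with hL
  have hγpos : ∀ k, k ≤ j → 0 < lanczosGamma A w0 k := by
    intro k hk
    rw [lanczosGamma]
    apply inv_pos.2
    apply Finset.prod_pos
    intro i hi
    exact hβpos i (lt_of_lt_of_le (Finset.mem_range.1 hi) hk)
  have hLpos : ∀ k, k ≤ j → 0 < L k := by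
    intro k hk
    rcases Nat.eq_zero_or_pos k with rfl | hk0
    · simp [hL, lanczosGamma]
    · exact mul_pos (pow_pos (by linarith [hApos (lt_of_lt_of_le hk0 hk)]) k) (hγpos k hk)
  have hLsucc : ∀ i, i < j → L (i + 1) = 4 * specNorm A * L i / lanczosBeta A w0 i := by
    intro i _
    simp only [hL, lanczosGamma, Finset.prod_range_succ, pow_succ, mul_inv]
    ring
  have hLquad : ∀ i, i + 1 ≤ j → 4 * L i ≤ L (i + 1) := by
    intro i hi
    rw [hLsucc i hi, le_div_iff₀ (hβpos i hi)]
    have h1 := hβleA i hi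
    have h2 := hLpos i (le_of_lt hi)
    nlinarith
  have hS : ∀ k, k + 1 ≤ j → (∑ i ∈ Finset.range (k + 1), L i) ≤ 4 / 3 * L k := by
    intro k
    induction k with
    | zero =>
      intro hk
      rw [Finset.sum_range_one]
      linarith [hLpos 0 (by omega)]
    | succ k ih =>
      intro hk
      rw [Finset.sum_range_succ]
      have h1 := ih (by omega)
      have h2 := hLquad k (by omega)
      linarith
  have main : ∀ k, k ≤ j → ∃ r > (0:ℝ), ∀ u u' : EuclideanSpace ℝ (Fin n),
      ‖u‖ = 1 → ‖u'‖ = 1 → ‖u - w0‖ < r → ‖u' - w0‖ < r →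
      (∀ i < k, 11 / 12 * lanczosBeta A w0 i ≤ ‖lanczosResidual A u i‖) ∧
      (∀ i ≤ k, ‖lanczosVec A u i - lanczosVec A u' i‖ ≤ L i * ‖u - u'‖) := by
    intro k
    induction k with
    | zero =>
      intro _
      refine ⟨1, one_pos, fun u u' _ _ _ _ => ⟨fun i hi => absurd hi (Nat.not_lt_zero i), ?_⟩⟩
      intro i hi
      interval_cases i
      have hL0 : L 0 = 1 := by simp [hL, lanczosGamma]
      rw [hL0, one_mul, show lanczosVec A u 0 = u by rw [lanczosVec],
        show lanczosVec A u' 0 = u' by rw [lanczosVec]]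
    | succ k ih =>
      intro hk1
      obtain ⟨r, hrpos, H⟩ := ih (by omega)
      have hkj : k < j := Nat.lt_of_succ_le hk1
      have hβkpos : 0 < lanczosBeta A w0 k := hβpos k hkj
      set βk := lanczosBeta A w0 k with hβk
      set C := specNorm A * (L k + 2 * ∑ i ∈ Finset.range (k + 1), L i) with hC
      have hCpos : 0 < C := by
        apply mul_pos (hApos (by omega))
        have hsum : 0 < ∑ i ∈ Finset.range (k + 1), L i :=
          Finset.sum_pos (fun i hi => hLpos i (by
            have := Finset.mem_range.1 hi; omega)) ⟨0, Finset.mem_range.2 (by omega)⟩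
        linarith [hLpos k (le_of_lt hkj)]
      refine ⟨min r (βk / (12 * C)), lt_min hrpos (by positivity), ?_⟩
      intro u u' hu1 hu'1 hur hu'r
      have hurr : ‖u - w0‖ < r := lt_of_lt_of_le hur (min_le_left _ _)
      have hurβ : ‖u - w0‖ < βk / (12 * C) := lt_of_lt_of_le hur (min_le_right _ _)
      have hu'rr : ‖u' - w0‖ < r := lt_of_lt_of_le hu'r (min_le_left _ _)
      have hu'rβ : ‖u' - w0‖ < βk / (12 * C) := lt_of_lt_of_le hu'r (min_le_right _ _)
      have hw0r : ‖w0 - w0‖ < r := by simpa using hrpos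
      obtain ⟨Hres_u, Hlip_uw0⟩ := H u w0 hu1 hu hurr hw0r
      obtain ⟨Hres_u', Hlip_u'w0⟩ := H u' w0 hu'1 hu hu'rr hw0r
      obtain ⟨-, Hlip_uu'⟩ := H u u' hu1 hu'1 hurr hu'rr
      have hresu : ∀ i < k, lanczosResidual A u i ≠ 0 := by
        intro i hi h0
        have h1 := Hres_u i hi
        have h2 := hβpos i (lt_trans hi hkj)
        rw [h0, norm_zero] at h1
        nlinarith
      have hresu' : ∀ i < k, lanczosResidual A u' i ≠ 0 := by
        intro i hi h0
        have h1 := Hres_u' i hi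
        have h2 := hβpos i (lt_trans hi hkj)
        rw [h0, norm_zero] at h1
        nlinarith
      have honu : Orthonormal ℝ (fun i : Fin (k + 1) => lanczosVec A u i.1) :=
        lanczos_orthonormal A u hu1 k hresu
      have honu' : Orthonormal ℝ (fun i : Fin (k + 1) => lanczosVec A u' i.1) :=
        lanczos_orthonormal A u' hu'1 k hresu'
      have honw0 : Orthonormal ℝ (fun i : Fin (k + 1) => lanczosVec A w0 i.1) :=
        lanczos_orthonormal A w0 hu k (fun i hi => hresT i (lt_trans hi hkj))
      have hrd : ∀ w : EuclideanSpace ℝ (Fin n),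
          Orthonormal ℝ (fun i : Fin (k + 1) => lanczosVec A w i.1) →
          (∀ i ≤ k, ‖lanczosVec A u i - lanczosVec A w i‖ ≤ L i * ‖u - w‖) →
          ‖lanczosResidual A u k - lanczosResidual A w k‖ ≤ C * ‖u - w‖ := by
        intro w hw hlip
        have h1 := residual_diff_le A u w k honu hw (fun i => L i * ‖u - w‖) hlip
        refine le_trans h1 (le_of_eq ?_)
        rw [← Finset.sum_mul, hC]
        ring
      have hrdiff_uw0 := hrd w0 honw0 Hlip_uw0
      have hCd : C * ‖u - w0‖ ≤ βk / 12 := by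
        have h1 : C * ‖u - w0‖ ≤ C * (βk / (12 * C)) :=
          mul_le_mul_of_nonneg_left (le_of_lt hurβ) (le_of_lt hCpos)
        have h2 : C * (βk / (12 * C)) = βk / 12 := by
          field_simp
        linarith
      have hresnorm : ‖lanczosResidual A w0 k‖ = βk := by rw [hβk, lanczosBeta]
      have hresk_u : 11 / 12 * βk ≤ ‖lanczosResidual A u k‖ := by
        have h3 := norm_sub_norm_le (lanczosResidual A w0 k) (lanczosResidual A u k)
        rw [norm_sub_rev] at h3
        linarith [hrdiff_uw0, hresnorm.le, hresnorm.ge]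
      have hresk_u' : 11 / 12 * βk ≤ ‖lanczosResidual A u' k‖ := by
        have hrdiff_u'w0 : ‖lanczosResidual A u' k - lanczosResidual A w0 k‖ ≤ C * ‖u' - w0‖ := by
          have honu'2 := honu'
          have h1 := residual_diff_le A u' w0 k honu' honw0 (fun i => L i * ‖u' - w0‖) Hlip_u'w0
          refine le_trans h1 (le_of_eq ?_)
          rw [← Finset.sum_mul, hC]
          ring
        have hCd' : C * ‖u' - w0‖ ≤ βk / 12 := by
          have h1 : C * ‖u' - w0‖ ≤ C * (βk / (12 * C)) :=
            mul_le_mul_of_nonneg_left (le_of_lt hu'rβ) (le_of_lt hCpos)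
          have h2 : C * (βk / (12 * C)) = βk / 12 := by field_simp
          linarith
        have h3 := norm_sub_norm_le (lanczosResidual A w0 k) (lanczosResidual A u' k)
        rw [norm_sub_rev] at h3
        linarith [hresnorm.le, hresnorm.ge]
      constructor
      · intro i hi
        rcases (by omega : i < k ∨ i = k) with h | rfl
        · exact Hres_u i h
        · exact hresk_u
      · intro i hi
        rcases (by omega : i ≤ k ∨ i = k + 1) with h | rfl
        · exact Hlip_uu' i h
        have hrdiff_uu' : ‖lanczosResidual A u k - lanczosResidual A u' k‖ ≤ C * ‖u - u'‖ := by
          have h1 := residual_diff_le A u u' k honu honu' (fun i => L i * ‖u - u'‖) Hlip_uu'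
          refine le_trans h1 (le_of_eq ?_)
          rw [← Finset.sum_mul, hC]
          ring
        have hru0 : lanczosResidual A u k ≠ 0 := by
          intro h0; rw [h0, norm_zero] at hresk_u; linarith
        have hru'0 : lanczosResidual A u' k ≠ 0 := by
          intro h0; rw [h0, norm_zero] at hresk_u'; linarith
        have hnl := normalize_lip hru0 hru'0
        rw [lanczosVec_succ, lanczosVec_succ]
        have h5 : 11 / 6 * βk * ‖‖lanczosResidual A u k‖⁻¹ • lanczosResidual A u k -
            ‖lanczosResidual A u' k‖⁻¹ • lanczosResidual A u' k‖ ≤ 2 * (C * ‖u - u'‖) := by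
          have hXY : 11 / 6 * βk ≤ ‖lanczosResidual A u k‖ + ‖lanczosResidual A u' k‖ := by
            linarith
          calc 11 / 6 * βk * ‖‖lanczosResidual A u k‖⁻¹ • lanczosResidual A u k -
                ‖lanczosResidual A u' k‖⁻¹ • lanczosResidual A u' k‖
              ≤ (‖lanczosResidual A u k‖ + ‖lanczosResidual A u' k‖) *
                ‖‖lanczosResidual A u k‖⁻¹ • lanczosResidual A u k -
                ‖lanczosResidual A u' k‖⁻¹ • lanczosResidual A u' k‖ :=
                mul_le_mul_of_nonneg_right hXY (norm_nonneg _)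
            _ ≤ 2 * ‖lanczosResidual A u k - lanczosResidual A u' k‖ := hnl
            _ ≤ 2 * (C * ‖u - u'‖) := by linarith
        have hC2 : C ≤ 11 / 3 * (specNorm A * L k) := by
          have h6 := hS k hk1
          rw [hC]
          nlinarith [hApos (by omega)]
        have h6 : C * ‖u - u'‖ ≤ 11 / 3 * (specNorm A * L k) * ‖u - u'‖ :=
          mul_le_mul_of_nonneg_right hC2 (norm_nonneg _)
        rw [hLsucc k hkj, div_mul_eq_mul_div, le_div_iff₀ hβkpos]
        nlinarith [h5, h6]
  -- final assembly
  intro c' hc'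
  obtain ⟨r, hrpos, H⟩ := main j le_rfl
  refine ⟨Metric.ball ut r, Metric.ball_mem_nhds ut hrpos, ?_⟩
  intro x hx y hy
  have hx1 : ‖x.1‖ = 1 := by
    have := x.2; rwa [mem_sphere_zero_iff_norm] at this
  have hy1 : ‖y.1‖ = 1 := by
    have := y.2; rwa [mem_sphere_zero_iff_norm] at this
  have hxr : ‖x.1 - w0‖ < r := by
    have := Metric.mem_ball.1 hx
    rwa [Subtype.dist_eq, dist_eq_norm] at this
  have hyr : ‖y.1 - w0‖ < r := by
    have := Metric.mem_ball.1 hy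
    rwa [Subtype.dist_eq, dist_eq_norm] at this
  obtain ⟨-, Hlip⟩ := H x.1 y.1 hx1 hy1 hxr hyr
  have h1 := Hlip j le_rfl
  have hdist : dist x y = ‖x.1 - y.1‖ := by rw [Subtype.dist_eq, dist_eq_norm]
  rw [dist_eq_norm, hdist]
  calc ‖lanczosVec A x.1 j - lanczosVec A y.1 j‖ ≤ L j * ‖x.1 - y.1‖ := h1
    _ ≤ c' * ‖x.1 - y.1‖ :=
        mul_le_mul_of_nonneg_right (le_of_lt hc') (norm_nonneg _)
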